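/- Let X be an odd orthosymplectic endomorphism, k ≥ 1 an integer, y ∈ V, and set x = X^{k−1}(y); assume X(x) = 0 and x ∉ Im(X^k). Then: (i) the scalar B(x,y) does not depend on the choice of y with X^{k−1}(y) = x; (ii) dim{v ∈ x^⊥ : X^a(v) ∈ ℂx} = dim Ker(X^a) + 1 for every integer a with 0 ≤ a < k−1; (iii) dim{v ∈ x^⊥ : X^{k−1}(v) ∈ ℂx} = dim Ker(X^{k−1}) + 1 if B(x,y) = 0, and = dim Ker(X^{k−1}) if B(x,y) ≠ 0; (iv) dim{v ∈ x^⊥ : X^a(v) ∈ ℂx} = dim Ker(X^a) − 1 for every a ≥ k. -/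

import Mathlib

/-- The bilinear super-symmetric form `B` on `V = V₀ × V₁` associated to a nondegenerate
symmetric bilinear form `φ` on `V₀` and a nondegenerate alternating bilinear form `ψ`
on `V₁`: `B((v,w),(v',w')) = φ(v,v') + ψ(w,w')`. -/
def Bform {V₀ V₁ : Type} [AddCommGroup V₀] [Module ℂ V₀] [AddCommGroup V₁] [Module ℂ V₁]
    (φ : V₀ →ₗ[ℂ] V₀ →ₗ[ℂ] ℂ) (ψ : V₁ →ₗ[ℂ] V₁ →ₗ[ℂ] ℂ) (p q : V₀ × V₁) : ℂ :=
  φ p.1 q.1 + ψ p.2 q.2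

/-- The graded pieces of `V = V₀ × V₁`: `Vgr V₀ V₁ false = V₀ × 0` (even part) and
`Vgr V₀ V₁ true = 0 × V₁` (odd part). -/
def Vgr (V₀ V₁ : Type) [AddCommGroup V₀] [Module ℂ V₀] [AddCommGroup V₁] [Module ℂ V₁]
    (ε : Bool) : Submodule ℂ (V₀ × V₁) :=
  if ε then Submodule.prod ⊥ ⊤ else Submodule.prod ⊤ ⊥

/-- The `B`-orthogonal complement `x^⊥ = {z : B(x,z) = 0}` of a vector `x ∈ V₀ × V₁`. -/
noncomputable def perp {V₀ V₁ : Type} [AddCommGroup V₀] [Module ℂ V₀] [AddCommGroup V₁] [Module ℂ V₁]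
    (φ : V₀ →ₗ[ℂ] V₀ →ₗ[ℂ] ℂ) (ψ : V₁ →ₗ[ℂ] V₁ →ₗ[ℂ] ℂ) (x : V₀ × V₁) :
    Submodule ℂ (V₀ × V₁) :=
  LinearMap.ker ((φ x.1).comp (LinearMap.fst ℂ V₀ V₁) + (ψ x.2).comp (LinearMap.snd ℂ V₀ V₁))

/-!
With the parity operator `σ = id × (-id)`, the `B`-adjoint of `X` is `σ X`, and
`(σ X)^n = ± X^n σ^n` has the same image as `X^n`. Nondegeneracy of `B` then identifies
`Im(X^n)` with the left orthogonal of `Ker(X^n)`: so `B(x, ·)` vanishes on `Ker(X^{k-1})` but not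
on `Ker(X^a)` for `a ≥ k`.

Let `S_a = (X^a)⁻¹(ℂx)`. If `x ∈ Im(X^a)`, i.e. `a ≤ k - 1`, then `dim S_a = dim Ker(X^a) + 1`;
otherwise `S_a = Ker(X^a)`. Intersecting with the hyperplane `x^⊥` lowers the dimension by one
exactly when `B(x, ·)` does not vanish on `S_a`. For `a < k - 1` we have `S_a ⊆ Ker(X^{k-1})`, and
on `S_{k-1}` the functional is `v ↦ c B(x, y)` where `X^{k-1} v = c x`.
-/

open Module Submodule LinearMap

section LinearAlgebra

variable {K V W : Type*} [Field K] [AddCommGroup V] [Module K V] [AddCommGroup W] [Module K W]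

theorem comap_span_singleton_eq_ker {T : V →ₗ[K] W} {x : W} (h : x ∉ range T) :
    (K ∙ x).comap T = ker T := by
  refine le_antisymm (fun v hv => ?_) (ker_le_comap T)
  obtain ⟨c, hc⟩ := mem_span_singleton.1 (mem_comap.1 hv)
  rcases eq_or_ne c 0 with rfl | hc0
  · rw [zero_smul] at hc
    exact hc.symm
  · exact absurd ⟨c⁻¹ • v, by rw [map_smul, ← hc, inv_smul_smul₀ hc0]⟩ h

variable [FiniteDimensional K V]

theorem finrank_comap_eq_finrank_range_inf_add_finrank_ker (T : V →ₗ[K] W) (L : Submodule K W) :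
    finrank K (L.comap T) = finrank K ↥(range T ⊓ L) + finrank K (ker T) := by
  have h := finrank_range_add_finrank_ker (T.domRestrict (L.comap T))
  rwa [range_domRestrict, map_comap_eq, ker_domRestrict,
    (comapSubtypeEquivOfLe (ker_le_comap T)).finrank_eq, eq_comm] at h

theorem finrank_comap_span_singleton_of_mem_range {T : V →ₗ[K] W} {x : W} (hx : x ≠ 0)
    (h : x ∈ range T) : finrank K ((K ∙ x).comap T) = finrank K (ker T) + 1 := by
  rw [finrank_comap_eq_finrank_range_inf_add_finrank_ker,
    inf_eq_right.2 ((span_singleton_le_iff_mem _ _).2 h), finrank_span_singleton hx, add_comm]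

theorem finrank_ker_inf_add_one {S : Submodule K V} {f : Module.Dual K V} (h : ¬ S ≤ ker f) :
    finrank K ↥(ker f ⊓ S) + 1 = finrank K S := by
  have hf : f ≠ 0 := by
    rintro rfl
    exact h (by simp)
  have htop : ker f ⊔ S = ⊤ :=
    ((isCoatom_ker_of_surjective (LinearMap.surjective hf)).not_le_iff_codisjoint.1 h).eq_top
  have := finrank_sup_add_finrank_inf_eq (ker f) S
  have := Module.Dual.finrank_ker_add_one_of_ne_zero hf
  rw [htop, finrank_top] at *
  omega

theorem finrank_ker_inf_comap_span_singleton_of_le {T : V →ₗ[K] W} {x : W} {f : Module.Dual K V}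
    (hx : x ≠ 0) (hxT : x ∈ range T) (hf : (K ∙ x).comap T ≤ ker f) :
    finrank K ↥(ker f ⊓ (K ∙ x).comap T) = finrank K (ker T) + 1 := by
  rw [inf_eq_right.2 hf, finrank_comap_span_singleton_of_mem_range hx hxT]

theorem finrank_ker_inf_comap_span_singleton_of_not_le {T : V →ₗ[K] W} {x : W}
    {f : Module.Dual K V} (hx : x ≠ 0) (hxT : x ∈ range T) (hf : ¬ (K ∙ x).comap T ≤ ker f) :
    finrank K ↥(ker f ⊓ (K ∙ x).comap T) = finrank K (ker T) := by
  have := finrank_ker_inf_add_one hf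
  rw [finrank_comap_span_singleton_of_mem_range hx hxT] at this
  omega

theorem finrank_ker_inf_comap_span_singleton_of_not_mem_range {T : V →ₗ[K] W} {x : W}
    {f : Module.Dual K V} (hxT : x ∉ range T) (hf : ¬ ker T ≤ ker f) :
    finrank K ↥(ker f ⊓ (K ∙ x).comap T) + 1 = finrank K (ker T) := by
  rw [comap_span_singleton_eq_ker hxT]
  exact finrank_ker_inf_add_one hf

end LinearAlgebra

section Adjoint

theorem LinearMap.IsAdjointPair.pow {R M N : Type*} [CommSemiring R] [AddCommMonoid M]
    [Module R M] [AddCommMonoid N] [Module R N] {B : M →ₗ[R] M →ₗ[R] N} {f g : Module.End R M}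
    (h : IsAdjointPair B B f g) (n : ℕ) : IsAdjointPair B B ⇑(f ^ n) ⇑(g ^ n) := by
  induction n with
  | zero => exact isAdjointPair_one
  | succ n ih => rw [pow_succ', pow_succ]; exact h.mul ih

variable {K V : Type*} [Field K] [AddCommGroup V] [Module K V] [FiniteDimensional K V]

theorem LinearMap.IsAdjointPair.mem_range_iff {B : LinearMap.BilinForm K V}
    (hB : B.SeparatingLeft) {f g : Module.End K V} (h : IsAdjointPair B B f g) {x : V} :
    x ∈ range f ↔ ∀ q ∈ ker g, B x q = 0 := by
  have hinj : Function.Injective B := ker_eq_bot.1 (separatingLeft_iff_ker_eq_bot.1 hB)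
  have hsurj : Function.Surjective B :=
    (injective_iff_surjective_of_finrank_eq_finrank Subspace.dual_finrank_eq.symm).1 hinj
  refine ⟨?_, fun hx => ?_⟩
  · rintro ⟨p, rfl⟩ q hq
    rw [h, mem_ker.1 hq, map_zero]
  · have hBx : B x ∈ range g.dualMap := by
      rw [range_dualMap_eq_dualAnnihilator_ker]
      exact (mem_dualAnnihilator _).2 hx
    obtain ⟨ℓ, hℓ⟩ := hBx
    obtain ⟨p, rfl⟩ := hsurj ℓ
    exact ⟨p, hinj (LinearMap.ext fun q => by rw [h, ← hℓ, dualMap_apply])⟩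

end Adjoint

theorem range_pow_mul_eq_range_pow {R M : Type*} [CommRing R] [AddCommGroup M] [Module R M]
    {σ X : Module.End R M} (hσ : IsUnit σ) (h : σ * X = -X * σ) (n : ℕ) :
    range ((σ * X) ^ n) = range (X ^ n) := by
  obtain ⟨τ, hτ, hστ⟩ : ∃ τ : Module.End R M, IsUnit τ ∧ (σ * X) ^ n = X ^ n * τ := by
    induction n with
    | zero => exact ⟨1, isUnit_one, by simp⟩
    | succ n ih =>
      obtain ⟨τ, hτ, hστ⟩ := ih
      refine ⟨(-1) ^ (n + 1) * σ * τ, ((isUnit_one.neg.pow _).mul hσ).mul hτ, ?_⟩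
      rw [pow_succ', hστ, mul_assoc, ← mul_assoc X, ← pow_succ', ← mul_assoc,
        (SemiconjBy.pow_right h (n + 1)).eq, neg_pow', mul_assoc, mul_assoc, mul_assoc]
  rw [hστ, Module.End.mul_eq_comp, range_comp_of_range_eq_top _
    (range_eq_top.2 (Module.End.isUnit_iff τ |>.1 hτ).surjective)]

section Orthosymplectic

variable {V₀ V₁ : Type} [AddCommGroup V₀] [Module ℂ V₀] [AddCommGroup V₁] [Module ℂ V₁]
  {φ : V₀ →ₗ[ℂ] V₀ →ₗ[ℂ] ℂ} {ψ : V₁ →ₗ[ℂ] V₁ →ₗ[ℂ] ℂ}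

variable (φ ψ) in
def superForm : LinearMap.BilinForm ℂ (V₀ × V₁) :=
  φ.compl₁₂ (fst ℂ V₀ V₁) (fst ℂ V₀ V₁) + ψ.compl₁₂ (snd ℂ V₀ V₁) (snd ℂ V₀ V₁)

theorem superForm_apply (p q : V₀ × V₁) : superForm φ ψ p q = Bform φ ψ p q := rfl

theorem perp_eq_ker_superForm (x : V₀ × V₁) : perp φ ψ x = ker (superForm φ ψ x) := rfl

theorem superForm_separatingLeft (hφnd : ∀ a : V₀, (∀ b : V₀, φ a b = 0) → a = 0)
    (hψnd : ∀ a : V₁, (∀ b : V₁, ψ a b = 0) → a = 0) : (superForm φ ψ).SeparatingLeft := by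
  intro p hp
  have h₀ : p.1 = 0 := hφnd _ fun b => by simpa [superForm] using hp (b, 0)
  have h₁ : p.2 = 0 := hψnd _ fun b => by simpa [superForm] using hp (0, b)
  exact Prod.ext h₀ h₁

variable (V₀ V₁) in
def parity : Module.End ℂ (V₀ × V₁) := prodMap LinearMap.id (-LinearMap.id)

theorem isUnit_parity : IsUnit (parity V₀ V₁) :=
  have h : parity V₀ V₁ * parity V₀ V₁ = 1 := LinearMap.ext fun p => by simp [parity]
  isUnit_iff_exists.2 ⟨_, h, h⟩

variable {u : V₀ →ₗ[ℂ] V₁} {ustar : V₁ →ₗ[ℂ] V₀} {X : Module.End ℂ (V₀ × V₁)}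

theorem parity_mul_eq (hX : ∀ p : V₀ × V₁, X p = (ustar p.2, u p.1)) :
    parity V₀ V₁ * X = -X * parity V₀ V₁ :=
  LinearMap.ext fun p => by simp [parity, hX]

theorem isAdjointPair_parity_mul (hφsymm : ∀ a b : V₀, φ a b = φ b a)
    (hψalt : ∀ a : V₁, ψ a a = 0) (hadj : ∀ (v : V₀) (w : V₁), φ (ustar w) v = ψ w (u v))
    (hX : ∀ p : V₀ × V₁, X p = (ustar p.2, u p.1)) :
    IsAdjointPair (superForm φ ψ) (superForm φ ψ) ⇑(parity V₀ V₁ * X) ⇑X := by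
  intro p q
  rw [superForm_apply, superForm_apply, Module.End.mul_apply, hX, hX]
  simp only [Bform, parity, prodMap_apply, id_apply, LinearMap.neg_apply, map_neg, hadj, hφsymm p.1]
  rw [← LinearMap.IsAlt.neg hψalt (u p.1), add_comm]

theorem mem_range_pow_iff [FiniteDimensional ℂ V₀] [FiniteDimensional ℂ V₁]
    (hφsymm : ∀ a b : V₀, φ a b = φ b a) (hφnd : ∀ a : V₀, (∀ b : V₀, φ a b = 0) → a = 0)
    (hψalt : ∀ a : V₁, ψ a a = 0) (hψnd : ∀ a : V₁, (∀ b : V₁, ψ a b = 0) → a = 0)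
    (hadj : ∀ (v : V₀) (w : V₁), φ (ustar w) v = ψ w (u v))
    (hX : ∀ p : V₀ × V₁, X p = (ustar p.2, u p.1)) (n : ℕ) {x : V₀ × V₁} :
    x ∈ range (X ^ n) ↔ ∀ q ∈ ker (X ^ n), superForm φ ψ x q = 0 := by
  rw [← range_pow_mul_eq_range_pow isUnit_parity (parity_mul_eq hX)]
  exact ((isAdjointPair_parity_mul hφsymm hψalt hadj hX).pow n).mem_range_iff
    (superForm_separatingLeft hφnd hψnd)

end Orthosymplectic

theorem dim_perp_inf_preimage_line_general
    (V₀ V₁ : Type) [AddCommGroup V₀] [Module ℂ V₀] [FiniteDimensional ℂ V₀]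
    [AddCommGroup V₁] [Module ℂ V₁] [FiniteDimensional ℂ V₁]
    (φ : V₀ →ₗ[ℂ] V₀ →ₗ[ℂ] ℂ) (ψ : V₁ →ₗ[ℂ] V₁ →ₗ[ℂ] ℂ)
    (hφsymm : ∀ a b : V₀, φ a b = φ b a)
    (hφnd : ∀ a : V₀, (∀ b : V₀, φ a b = 0) → a = 0)
    (hψalt : ∀ a : V₁, ψ a a = 0)
    (hψnd : ∀ a : V₁, (∀ b : V₁, ψ a b = 0) → a = 0)
    (u : V₀ →ₗ[ℂ] V₁) (ustar : V₁ →ₗ[ℂ] V₀)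
    (hadj : ∀ (v : V₀) (w : V₁), φ (ustar w) v = ψ w (u v))
    (X : Module.End ℂ (V₀ × V₁))
    (hX : ∀ p : V₀ × V₁, X p = (ustar p.2, u p.1))
    (k : ℕ) (y x : V₀ × V₁) (hxy : x = (X ^ (k - 1)) y)
    (hXx : X x = 0) (hxim : x ∉ LinearMap.range (X ^ k)) :
    (∀ y' : V₀ × V₁, (X ^ (k - 1)) y' = x → Bform φ ψ x y' = Bform φ ψ x y) ∧
    (∀ a : ℕ, a < k - 1 →
      Module.finrank ℂ ↥(perp φ ψ x ⊓ Submodule.comap (X ^ a) (Submodule.span ℂ {x}))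
        = Module.finrank ℂ ↥(LinearMap.ker (X ^ a)) + 1) ∧
    (Bform φ ψ x y = 0 →
      Module.finrank ℂ
          ↥(perp φ ψ x ⊓ Submodule.comap (X ^ (k - 1)) (Submodule.span ℂ {x}))
        = Module.finrank ℂ ↥(LinearMap.ker (X ^ (k - 1))) + 1) ∧
    (Bform φ ψ x y ≠ 0 →
      Module.finrank ℂ
          ↥(perp φ ψ x ⊓ Submodule.comap (X ^ (k - 1)) (Submodule.span ℂ {x}))
        = Module.finrank ℂ ↥(LinearMap.ker (X ^ (k - 1)))) ∧
    (∀ a : ℕ, k ≤ a →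
      Module.finrank ℂ ↥(perp φ ψ x ⊓ Submodule.comap (X ^ a) (Submodule.span ℂ {x})) + 1
        = Module.finrank ℂ ↥(LinearMap.ker (X ^ a))) := by
  have hx0 : x ≠ 0 := by
    rintro rfl
    exact hxim (zero_mem _)
  have hx_mem (a : ℕ) (ha : a ≤ k - 1) : x ∈ range (X ^ a) :=
    ⟨(X ^ (k - 1 - a)) y, by rw [hxy, ← Module.End.mul_apply, ← pow_add, Nat.add_sub_cancel' ha]⟩
  have hx_not_mem (a : ℕ) (ha : k ≤ a) : x ∉ range (X ^ a) := fun h => hxim <| by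
    rw [← pow_mul_pow_sub X ha, Module.End.mul_eq_comp] at h
    exact range_comp_le_range _ _ h
  have hrange := mem_range_pow_iff hφsymm hφnd hψalt hψnd hadj hX
  have hker : ∀ v ∈ ker (X ^ (k - 1)), superForm φ ψ x v = 0 := (hrange _).1 (hx_mem _ le_rfl)
  have hpre (v : V₀ × V₁) (c : ℂ) (hv : c • x = (X ^ (k - 1)) v) :
      superForm φ ψ x v = c * superForm φ ψ x y := by
    have h := hker (v - c • y) (by rw [mem_ker, map_sub, map_smul, ← hxy, hv, sub_self])
    rwa [map_sub, map_smul, smul_eq_mul, sub_eq_zero] at h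
  simp only [perp_eq_ker_superForm, ← superForm_apply]
  refine ⟨fun y' hy' => by simpa using hpre y' 1 (by rw [one_smul, hy']),
    fun a ha => ?_, fun hB => ?_, fun hB => ?_, fun a ha => ?_⟩
  · refine finrank_ker_inf_comap_span_singleton_of_le hx0 (hx_mem a ha.le) fun v hv => hker v ?_
    obtain ⟨c, hc⟩ := mem_span_singleton.1 (mem_comap.1 hv)
    rw [mem_ker, ← Nat.sub_add_cancel ha.le, pow_add, Module.End.mul_apply, ← hc, map_smul,
      Module.End.pow_map_zero_of_le (k := 1) (by omega) (by rwa [pow_one]), smul_zero]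
  · refine finrank_ker_inf_comap_span_singleton_of_le hx0 (hx_mem _ le_rfl) fun v hv => ?_
    obtain ⟨c, hc⟩ := mem_span_singleton.1 (mem_comap.1 hv)
    rw [mem_ker, hpre v c hc, hB, mul_zero]
  · refine finrank_ker_inf_comap_span_singleton_of_not_le hx0 (hx_mem _ le_rfl) fun h => hB ?_
    exact h (mem_comap.2 (hxy ▸ mem_span_singleton_self x))
  · exact finrank_ker_inf_comap_span_singleton_of_not_mem_range (hx_not_mem a ha)
      fun h => hx_not_mem a ha ((hrange a).2 fun q hq => h hq)

/-- Let `X` be odd orthosymplectic, `k ≥ 1`, `x = X^{k−1}(y)` with `X(x) = 0` and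
`x ∉ Im(X^k)`. Then: (i) `B(x,y)` does not depend on the choice of `y`;
(ii) `dim{v ∈ x^⊥ : X^a(v) ∈ ℂx} = dim Ker(X^a) + 1` for `a < k−1`;
(iii) for `a = k−1` this dimension is `dim Ker(X^{k−1}) + 1` if `B(x,y) = 0` and
`dim Ker(X^{k−1})` if `B(x,y) ≠ 0`; (iv) it is `dim Ker(X^a) − 1` for `a ≥ k`. -/
theorem dim_perp_inf_preimage_line
    (V₀ V₁ : Type) [AddCommGroup V₀] [Module ℂ V₀] [FiniteDimensional ℂ V₀]
    [AddCommGroup V₁] [Module ℂ V₁] [FiniteDimensional ℂ V₁]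
    (φ : V₀ →ₗ[ℂ] V₀ →ₗ[ℂ] ℂ) (ψ : V₁ →ₗ[ℂ] V₁ →ₗ[ℂ] ℂ)
    (hφsymm : ∀ a b : V₀, φ a b = φ b a)
    (hφnd : ∀ a : V₀, (∀ b : V₀, φ a b = 0) → a = 0)
    (hψalt : ∀ a : V₁, ψ a a = 0)
    (hψnd : ∀ a : V₁, (∀ b : V₁, ψ a b = 0) → a = 0)
    (u : V₀ →ₗ[ℂ] V₁) (ustar : V₁ →ₗ[ℂ] V₀)
    (hadj : ∀ (v : V₀) (w : V₁), φ (ustar w) v = ψ w (u v))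
    (X : Module.End ℂ (V₀ × V₁))
    (hX : ∀ p : V₀ × V₁, X p = (ustar p.2, u p.1))
    (k : ℕ) (hk : 1 ≤ k) (y x : V₀ × V₁) (hxy : x = (X ^ (k - 1)) y)
    (hXx : X x = 0) (hxim : x ∉ LinearMap.range (X ^ k)) :
    (∀ y' : V₀ × V₁, (X ^ (k - 1)) y' = x → Bform φ ψ x y' = Bform φ ψ x y) ∧
    (∀ a : ℕ, a < k - 1 →
      Module.finrank ℂ ↥(perp φ ψ x ⊓ Submodule.comap (X ^ a) (Submodule.span ℂ {x}))
        = Module.finrank ℂ ↥(LinearMap.ker (X ^ a)) + 1) ∧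
    (Bform φ ψ x y = 0 →
      Module.finrank ℂ
          ↥(perp φ ψ x ⊓ Submodule.comap (X ^ (k - 1)) (Submodule.span ℂ {x}))
        = Module.finrank ℂ ↥(LinearMap.ker (X ^ (k - 1))) + 1) ∧
    (Bform φ ψ x y ≠ 0 →
      Module.finrank ℂ
          ↥(perp φ ψ x ⊓ Submodule.comap (X ^ (k - 1)) (Submodule.span ℂ {x}))
        = Module.finrank ℂ ↥(LinearMap.ker (X ^ (k - 1)))) ∧
    (∀ a : ℕ, k ≤ a →
      Module.finrank ℂ ↥(perp φ ψ x ⊓ Submodule.comap (X ^ a) (Submodule.span ℂ {x})) + 1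
        = Module.finrank ℂ ↥(LinearMap.ker (X ^ a))) :=
  dim_perp_inf_preimage_line_general V₀ V₁ φ ψ hφsymm hφnd hψalt hψnd u ustar hadj X hX k y x hxy
    hXx hxim
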